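/- arXiv:2511.16400 — 4 statements merged into one kernel-verified Lean document; each statement's English description precedes it below -/
import Mathlib

section
/- Let X be a connected graph metric space (vertices with edge-path distance, so d is integer-valued on vertices) and let x be a dead end relative to o, i.e. assume there is no vertex y ≠ x with d(o,y) = d(o,x) + d(x,y). Then b_x is an isolated point of the closure of {b_z : z ∈ X} in the topology of pointwise convergence, i.e. b_x is not a pointwise limit of b_{y_n} with y_n ≠ x eventually. -/
open Filter Topology

/-- In a graph metric space (integer-valued metric), if `x` is a dead end relative to `o`
(no `y ≠ x` with `d(o,y) = d(o,x) + d(x,y)`), then `b_x` is isolated: any sequence with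
`b_{yₙ} → b_x` pointwise satisfies `yₙ = x` for all large `n`. -/
theorem dead_end_isolated {X : Type*} [MetricSpace X] (o x : X)
    (hint : ∀ a b : X, ∃ k : ℕ, dist a b = (k : ℝ))
    (hdead : ¬ ∃ y : X, y ≠ x ∧ dist o y = dist o x + dist x y)
    (y : ℕ → X)
    (hconv : ∀ z : X,
      Tendsto (fun n => dist z (y n) - dist o (y n)) atTop (𝓝 (dist z x - dist o x))) :
    ∀ᶠ n in atTop, y n = x := by
  have h := hconv x
  rw [Metric.tendsto_atTop] at h
  obtain ⟨N, hN⟩ := h 1 one_pos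
  filter_upwards [eventually_ge_atTop N] with n hn
  have h1 := hN n hn
  obtain ⟨k, hk⟩ := hint x (y n)
  obtain ⟨m, hm⟩ := hint o (y n)
  obtain ⟨j, hj⟩ := hint o x
  rw [Real.dist_eq, hk, hm, hj, dist_self] at h1
  have hz : (k : ℤ) - m - (0 - j) = 0 := by
    have : |((k : ℤ) - m - (0 - j) : ℤ)| < 1 := by
      have : |((k : ℝ) - m - (0 - j))| < 1 := h1
      exact_mod_cast this
    rw [abs_lt] at this
    omega
  by_contra hne
  exact hdead ⟨y n, hne, by rw [hm, hj, hk]; exact_mod_cast (by omega : (m:ℤ) = j + k)⟩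
end

section
/- Let x_n and y_n be sequences in a graph metric space X converging (pointwise, as the functions b_{x_n}, b_{y_n}) to horofunctions φ and ψ respectively. Assume that for every z ∈ X there is n₀ such that for all n ≥ n₀, the point x_n lies on a geodesic from z to y_m and on a geodesic from o to y_m for all but finitely many m (i.e. d(z,y_m) = d(z,x_n) + d(x_n,y_m) and d(o,y_m) = d(o,x_n) + d(x_n,y_m)). Then φ = ψ. -/
open Filter Topology

/-- Guard criterion for equality of horofunctions: if `b_{xₙ} → φ`, `b_{yₙ} → ψ`
pointwise and for every `z` there is `n₀` such that for all `n ≥ n₀` the point `xₙ`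
is a guard from `z` to `y_m` and from `o` to `y_m` for all but finitely many `m`,
then `φ = ψ`. -/
theorem guard_criterion_horofunctions {X : Type*} [MetricSpace X] (o : X)
    (x y : ℕ → X) (φ ψ : X → ℝ)
    (hφ : ∀ z : X, Tendsto (fun n => dist z (x n) - dist o (x n)) atTop (𝓝 (φ z)))
    (hψ : ∀ z : X, Tendsto (fun n => dist z (y n) - dist o (y n)) atTop (𝓝 (ψ z)))
    (hguard : ∀ z : X, ∃ n₀ : ℕ, ∀ n ≥ n₀, ∀ᶠ m in atTop,
      dist z (y m) = dist z (x n) + dist (x n) (y m) ∧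
      dist o (y m) = dist o (x n) + dist (x n) (y m)) :
    φ = ψ := by
  funext z
  obtain ⟨n₀, hn₀⟩ := hguard z
  have key : ∀ n ≥ n₀, dist z (x n) - dist o (x n) = ψ z := by
    intro n hn
    have h1 : Tendsto (fun m => dist z (y m) - dist o (y m)) atTop
        (𝓝 (dist z (x n) - dist o (x n))) := by
      have heq : (fun m => dist z (y m) - dist o (y m)) =ᶠ[atTop]
          (fun _ => dist z (x n) - dist o (x n)) := by
        filter_upwards [hn₀ n hn] with m ⟨h1, h2⟩
        rw [h1, h2]; ring
      exact tendsto_const_nhds.congr' heq.symm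
    exact tendsto_nhds_unique h1 (hψ z)
  have : Tendsto (fun n => dist z (x n) - dist o (x n)) atTop (𝓝 (ψ z)) := by
    have heq : (fun n => dist z (x n) - dist o (x n)) =ᶠ[atTop] (fun _ => ψ z) :=
      eventually_atTop.2 ⟨n₀, key⟩
    exact tendsto_const_nhds.congr' heq.symm
  exact tendsto_nhds_unique (hφ z) this
end

section
/- Let G act by homeomorphisms on a compact Hausdorff space Z with at least 3 points, and let g ∈ G admit north–south dynamics relative to two distinct fixed points g⁻, g⁺ ∈ Z: for every open neighborhood U of g⁻ and V of g⁺ there exists n₀ such that gⁿ(Z \ U) ⊆ V and g⁻ⁿ(Z \ V) ⊆ U for all n ≥ n₀. If the action of G on Z is minimal (every orbit is dense), then the action is extremely proximal: for every closed set F ⊊ Z and every nonempty open set O ⊆ Z there exists h ∈ G with h·F ⊆ O. -/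
open MulAction

/-- A minimal action on a compact Hausdorff space (with at least 3 points) admitting an
element with north–south dynamics is extremely proximal. -/
theorem northsouth_minimal_extremely_proximal {G Z : Type*} [Group G]
    [TopologicalSpace Z] [CompactSpace Z] [T2Space Z] [MulAction G Z]
    (hcont : ∀ g : G, Continuous (fun z : Z => g • z))
    (hbig : ∃ a b c : Z, a ≠ b ∧ a ≠ c ∧ b ≠ c)
    (g : G) (gm gp : Z) (hne : gm ≠ gp)
    (hfixm : g • gm = gm) (hfixp : g • gp = gp)
    (hNS : ∀ U V : Set Z, IsOpen U → IsOpen V → gm ∈ U → gp ∈ V →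
      ∃ n₀ : ℕ, ∀ n ≥ n₀, (∀ z ∉ U, (g ^ n) • z ∈ V) ∧ (∀ z ∉ V, (g⁻¹ ^ n) • z ∈ U))
    (hmin : ∀ z : Z, Dense (MulAction.orbit G z)) :
    ∀ F : Set Z, IsClosed F → F ≠ Set.univ →
      ∀ O : Set Z, IsOpen O → O.Nonempty → ∃ h : G, (fun z : Z => h • z) '' F ⊆ O := by
  intro F hFclosed hFne O hOopen hOne
  -- Fᶜ is open and nonempty
  have hFcopen : IsOpen Fᶜ := hFclosed.isOpen_compl
  have hFcne : Fᶜ.Nonempty := by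
    obtain ⟨x, hx⟩ := Set.ne_univ_iff_exists_notMem F |>.mp hFne
    exact ⟨x, hx⟩
  -- find a with a • gm ∉ F
  obtain ⟨y, ⟨a, rfl⟩, hyF⟩ := (hmin gm).exists_mem_open hFcopen hFcne
  -- find c with c • gp ∈ O
  obtain ⟨w, ⟨c, rfl⟩, hwO⟩ := (hmin gp).exists_mem_open hOopen hOne
  set U : Set Z := (fun z : Z => a • z) ⁻¹' Fᶜ with hU
  set V : Set Z := (fun z : Z => c • z) ⁻¹' O with hV
  have hUopen : IsOpen U := hFcopen.preimage (hcont a)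
  have hVopen : IsOpen V := hOopen.preimage (hcont c)
  obtain ⟨n₀, hn₀⟩ := hNS U V hUopen hVopen hyF hwO
  refine ⟨c * g ^ n₀ * a⁻¹, ?_⟩
  rintro z ⟨x, hxF, rfl⟩
  have hx : a⁻¹ • x ∉ U := by
    simp [hU, Set.mem_preimage, smul_smul, hxF]
  have := (hn₀ n₀ le_rfl).1 _ hx
  simpa [hV, Set.mem_preimage, smul_smul, mul_assoc] using this
end

section
/- Let G act by homeomorphisms on a compact Hausdorff space Z, and suppose some g ∈ G has north–south dynamics relative to fixed points g⁻ ≠ g⁺. Then the closure of the G-orbit of g⁺ is contained in every nonempty closed G-invariant subset of Z that contains at least one point other than g⁻. -/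
open MulAction

/-- If `g` has north–south dynamics on a compact Hausdorff `G`-space relative to
`g⁻ ≠ g⁺`, then the orbit closure of `g⁺` is contained in every nonempty closed
`G`-invariant subset containing a point other than `g⁻`. -/
theorem northsouth_orbit_closure_minimal {G Z : Type*} [Group G]
    [TopologicalSpace Z] [CompactSpace Z] [T2Space Z] [MulAction G Z]
    (hcont : ∀ g : G, Continuous (fun z : Z => g • z))
    (g : G) (gm gp : Z) (hne : gm ≠ gp)
    (hNS : ∀ U V : Set Z, IsOpen U → IsOpen V → gm ∈ U → gp ∈ V →
      ∃ n₀ : ℕ, ∀ n ≥ n₀, (∀ z ∉ U, (g ^ n) • z ∈ V) ∧ (∀ z ∉ V, (g⁻¹ ^ n) • z ∈ U)) :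
    ∀ A : Set Z, IsClosed A → (∀ h : G, ∀ z ∈ A, h • z ∈ A) →
      (∃ x ∈ A, x ≠ gm) → closure (MulAction.orbit G gp) ⊆ A := by
  intro A hA hinv ⟨x, hxA, hxgm⟩
  have hgp : gp ∈ A := by
    rw [← hA.closure_eq]
    rw [mem_closure_iff]
    intro V hV hgpV
    have hU : IsOpen ({x}ᶜ : Set Z) := isClosed_singleton.isOpen_compl
    have hgmU : gm ∈ ({x}ᶜ : Set Z) := fun h => hxgm (h.symm)
    obtain ⟨n₀, hn⟩ := hNS {x}ᶜ V hU hV hgmU hgpV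
    refine ⟨(g ^ n₀) • x, ?_, hinv _ _ hxA⟩
    exact (hn n₀ le_rfl).1 x (by simp)
  rw [hA.closure_subset_iff]
  rintro _ ⟨h, rfl⟩
  exact hinv h gp hgp
end
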